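/- arXiv:1811.05861 — 3 statements merged into one kernel-verified Lean document; each statement's English description precedes it below -/
import Mathlib

section
/- For a complex number a with Re(a) > 0 and an integer j ≥ 2, the integral ∫₀^∞ t^(j-1) e^(-at) / (1 - e^(-2t)) dt equals 2^(-j) (j-1)! ζ(j, a/2), where ζ(s,x) is the Hurwitz zeta function. -/
open Complex MeasureTheory Set Filter Topology

/-- The Hurwitz zeta function `ζ(s, x) = ∑_{m=0}^∞ 1/(m+x)^s`. -/
noncomputable def hurwitzZetaSum (s x : ℂ) : ℂ := ∑' m : ℕ, 1/((m:ℂ)+x)^s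

lemma aux_norm_eq {c : ℂ} (n : ℕ) {t : ℝ} (ht : 0 < t) :
    ‖(t:ℂ)^n * Complex.exp (-c*t)‖ = t^n * Real.exp (-c.re*t) := by
  rw [norm_mul, norm_pow, Complex.norm_real, Real.norm_of_nonneg ht.le,
      Complex.norm_exp]
  congr 2
  simp [Complex.mul_re]

lemma aux_integrable {c : ℂ} (hc : 0 < c.re) (n : ℕ) :
    IntegrableOn (fun t : ℝ => (t:ℂ)^n * Complex.exp (-c*t)) (Set.Ioi 0) := by
  have h : IntegrableOn (fun x : ℝ => x ^ (n:ℝ) * Real.exp (-c.re * x ^ (1:ℝ)))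
      (Set.Ioi 0) :=
    integrableOn_rpow_mul_exp_neg_mul_rpow
      (lt_of_lt_of_le neg_one_lt_zero (Nat.cast_nonneg n)) one_pos hc
  refine h.mono' ?_ ?_
  · exact (Continuous.aestronglyMeasurable (by fun_prop)).restrict
  · rw [ae_restrict_iff' measurableSet_Ioi]
    filter_upwards with t ht
    rw [aux_norm_eq n ht, Real.rpow_one, Real.rpow_natCast]

lemma aux_tendsto {c : ℂ} (hc : 0 < c.re) (n : ℕ) :
    Tendsto (fun t : ℝ => (t:ℂ)^n * Complex.exp (-c*t)) atTop (𝓝 0) := by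
  rw [tendsto_zero_iff_norm_tendsto_zero]
  have h1 : Tendsto (fun t : ℝ => t^n * Real.exp (-t)) atTop (𝓝 0) :=
    Real.tendsto_pow_mul_exp_neg_atTop_nhds_zero n
  have h2 : Tendsto (fun t : ℝ => c.re * t) atTop atTop :=
    tendsto_id.const_mul_atTop hc
  have h3 := (h1.comp h2).const_mul ((c.re)⁻¹^n)
  rw [mul_zero] at h3
  refine h3.congr' ?_
  filter_upwards [eventually_gt_atTop 0] with t ht
  simp only [Function.comp]
  rw [aux_norm_eq n ht, neg_mul, mul_pow]
  field_simp
  rw [← mul_pow, one_div_mul_cancel hc.ne', one_pow]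

lemma aux_integral {c : ℂ} (hc : 0 < c.re) :
    ∀ n : ℕ, ∫ t in Set.Ioi (0:ℝ), (t:ℂ)^n * Complex.exp (-c*t)
      = (n.factorial : ℂ) / c^(n+1) := by
  have hc0 : c ≠ 0 := fun h => by simp [h] at hc
  intro n
  induction n with
  | zero =>
    have hderiv : ∀ t : ℝ, t ∈ Set.Ioi (0:ℝ) →
        HasDerivAt (fun t : ℝ => -c⁻¹ * Complex.exp (-c*t))
          ((t:ℂ)^0 * Complex.exp (-c*t)) t := by
      intro t _
      have : HasDerivAt (fun z : ℂ => -c⁻¹ * Complex.exp (-c*z))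
          (-c⁻¹ * (Complex.exp (-c*t) * (-c * 1))) (t:ℝ) :=
        (((hasDerivAt_id (t:ℂ)).const_mul (-c)).cexp).const_mul _
      have h2 := this.comp_ofReal
      convert h2 using 1
      field_simp
    have htend : Tendsto (fun t : ℝ => -c⁻¹ * Complex.exp (-c*t)) atTop (𝓝 0) := by
      have := (aux_tendsto hc 0).const_mul (-c⁻¹)
      simpa using this
    have := integral_Ioi_of_hasDerivAt_of_tendsto
      (f := fun t : ℝ => -c⁻¹ * Complex.exp (-c*t))
      (Continuous.continuousWithinAt (by fun_prop)) hderiv (aux_integrable hc 0) htend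
    rw [this]
    simp [hc0]
  | succ n ih =>
    set F : ℝ → ℂ := fun t => (t:ℂ)^(n+1) * Complex.exp (-c*t) with hF
    set F' : ℝ → ℂ := fun t =>
      ((n:ℂ)+1) * ((t:ℂ)^n * Complex.exp (-c*t)) + (-c) * ((t:ℂ)^(n+1) * Complex.exp (-c*t))
      with hF'
    have hderiv : ∀ t : ℝ, t ∈ Set.Ioi (0:ℝ) → HasDerivAt F (F' t) t := by
      intro t _
      have : HasDerivAt (fun z : ℂ => z^(n+1) * Complex.exp (-c*z))
          ((((n:ℂ)+1) * (t:ℂ)^n) * Complex.exp (-c*t)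
            + (t:ℂ)^(n+1) * (Complex.exp (-c*t) * (-c * 1))) (t:ℝ) := by
        have h1 := hasDerivAt_pow (n+1) (t:ℂ)
        have h2 := (((hasDerivAt_id (t:ℂ)).const_mul (-c)).cexp)
        have := h1.fun_mul h2
        refine this.congr_deriv ?_
        simp only [id_eq, Nat.add_sub_cancel]
        push_cast
        ring
      have h2 := this.comp_ofReal
      convert h2 using 1
      simp only [F']
      ring
    have hint : IntegrableOn F' (Set.Ioi 0) :=
      (((aux_integrable hc n).const_mul _).add ((aux_integrable hc (n+1)).const_mul _))
    have htend : Tendsto F atTop (𝓝 0) := aux_tendsto hc (n+1)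
    have hF0 : F 0 = 0 := by simp [F]
    have heq := integral_Ioi_of_hasDerivAt_of_tendsto
      (f := F) (Continuous.continuousWithinAt (by fun_prop)) hderiv hint htend
    rw [hF0, sub_zero] at heq
    have hsplit : ∫ t in Set.Ioi (0:ℝ), F' t
        = ((n:ℂ)+1) * (∫ t in Set.Ioi (0:ℝ), (t:ℂ)^n * Complex.exp (-c*t))
          + (-c) * (∫ t in Set.Ioi (0:ℝ), (t:ℂ)^(n+1) * Complex.exp (-c*t)) := by
      rw [MeasureTheory.integral_add ((aux_integrable hc n).const_mul _)
        ((aux_integrable hc (n+1)).const_mul _), integral_const_mul, integral_const_mul]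
    rw [hsplit, ih] at heq
    have hcp : c^(n+1) ≠ 0 := pow_ne_zero _ hc0
    have hcp2 : c^(n+1+1) ≠ 0 := pow_ne_zero _ hc0
    have : (-c) * (∫ t in Set.Ioi (0:ℝ), (t:ℂ)^(n+1) * Complex.exp (-c*t))
        = -(((n:ℂ)+1) * ((n.factorial : ℂ) / c^(n+1))) := by linear_combination heq
    have h4 : (∫ t in Set.Ioi (0:ℝ), (t:ℂ)^(n+1) * Complex.exp (-c*t))
        = ((n:ℂ)+1) * ((n.factorial : ℂ) / c^(n+1)) / c := by
      field_simp at this ⊢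
      linear_combination -this
    rw [h4, Nat.factorial_succ]
    push_cast
    rw [← mul_div_assoc, div_div, ← pow_succ]

lemma aux_integral_real {b : ℝ} (hb : 0 < b) (n : ℕ) :
    ∫ t in Set.Ioi (0:ℝ), t^n * Real.exp (-b*t) = (n.factorial : ℝ) / b^(n+1) := by
  have h := aux_integral (c := (b:ℂ)) (by simpa using hb) n
  have h2 : ∫ t in Set.Ioi (0:ℝ), ((t^n * Real.exp (-b*t) : ℝ) : ℂ)
      = ((∫ t in Set.Ioi (0:ℝ), t^n * Real.exp (-b*t) : ℝ) : ℂ) := integral_ofReal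
  rw [← Complex.ofReal_inj]
  push_cast
  rw [← h, ← h2]
  refine setIntegral_congr_fun measurableSet_Ioi fun t ht => ?_
  push_cast [Complex.ofReal_exp]
  ring

/-- For complex `a` with `Re a > 0` and integer `j ≥ 2`,
`∫₀^∞ t^(j-1) e^(-at)/(1-e^(-2t)) dt = 2^(-j) (j-1)! ζ(j, a/2)`. -/
theorem stmt5 (a : ℂ) (ha : 0 < a.re) (j : ℕ) (hj : 2 ≤ j) :
    ∫ t in Set.Ioi (0:ℝ), (t:ℂ)^(j-1) * Complex.exp (-a*t) / (1 - Complex.exp (-2*t))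
      = (2:ℂ)^(-(j:ℤ)) * ((j-1).factorial : ℂ) * hurwitzZetaSum j (a/2) := by
  obtain ⟨n, rfl⟩ : ∃ n, j = n + 1 := ⟨j - 1, by omega⟩
  have hn : 1 ≤ n := by omega
  simp only [Nat.add_sub_cancel]
  have hre : ∀ m : ℕ, 0 < (a + 2*(m:ℂ)).re := by
    intro m
    have : (a + 2*(m:ℂ)).re = a.re + 2*m := by simp [Complex.mul_re]
    rw [this]
    positivity
  have key : Set.EqOn
      (fun t : ℝ => (t:ℂ)^n * Complex.exp (-a*t) / (1 - Complex.exp (-2*t)))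
      (fun t : ℝ => ∑' m : ℕ, (t:ℂ)^n * Complex.exp (-(a+2*(m:ℂ))*t)) (Set.Ioi 0) := by
    intro t ht
    have ht : (0:ℝ) < t := ht
    have hlt : ‖Complex.exp (-2*(t:ℂ))‖ < 1 := by
      rw [Complex.norm_exp, Real.exp_lt_one_iff]
      have : (-2*(t:ℂ)).re = -2*t := by simp
      rw [this]; linarith
    simp only
    rw [div_eq_mul_inv, ← tsum_geometric_of_norm_lt_one hlt, ← tsum_mul_left]
    refine tsum_congr fun m => ?_
    rw [← Complex.exp_nat_mul, mul_assoc, ← Complex.exp_add,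
      show -a*(t:ℂ) + m*(-2*t) = -(a+2*(m:ℂ))*t by push_cast; ring]
  rw [MeasureTheory.setIntegral_congr_fun measurableSet_Ioi key]
  have hint : ∀ m : ℕ,
      Integrable (fun t : ℝ => (t:ℂ)^n * Complex.exp (-(a+2*(m:ℂ))*t))
        (volume.restrict (Set.Ioi 0)) := fun m => aux_integrable (hre m) n
  have hnorm : ∀ m : ℕ,
      (∫ t in Set.Ioi (0:ℝ), ‖(t:ℂ)^n * Complex.exp (-(a+2*(m:ℂ))*t)‖)
        = (n.factorial : ℝ) / (a.re + 2*m)^(n+1) := by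
    intro m
    rw [setIntegral_congr_fun measurableSet_Ioi
      (fun t ht => aux_norm_eq (c := a+2*(m:ℂ)) n ht)]
    have h1 : (a + 2*(m:ℂ)).re = a.re + 2*m := by simp [Complex.mul_re]
    rw [h1, aux_integral_real (by positivity) n]
  have hsummable : Summable (fun m : ℕ => (n.factorial : ℝ) / (a.re + 2*m)^(n+1)) := by
    have h1 : Summable (fun m : ℕ => 1/|(m:ℝ) + a.re/2|^((n:ℝ)+1)) := by
      rw [Real.summable_one_div_nat_add_rpow]
      have : (1:ℝ) ≤ n := by exact_mod_cast hn
      linarith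
    have h2 := h1.mul_left ((n.factorial : ℝ)/2^(n+1))
    refine h2.congr fun m => ?_
    have hx : 0 < (m:ℝ) + a.re/2 := by positivity
    rw [abs_of_pos hx, show ((n:ℝ)+1) = ((n+1 : ℕ):ℝ) by push_cast; ring,
      Real.rpow_natCast, div_mul_div_comm, mul_one,
      show 2^(n+1) * ((m:ℝ) + a.re/2)^(n+1) = (a.re + 2*m)^(n+1) by rw [← mul_pow]; ring_nf]
  have hsum : Summable (fun m : ℕ =>
      ∫ t in Set.Ioi (0:ℝ), ‖(t:ℂ)^n * Complex.exp (-(a+2*(m:ℂ))*t)‖) :=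
    hsummable.congr fun m => (hnorm m).symm
  rw [← MeasureTheory.integral_tsum_of_summable_integral_norm hint hsum]
  have hval : ∀ m : ℕ, (∫ t in Set.Ioi (0:ℝ), (t:ℂ)^n * Complex.exp (-(a+2*(m:ℂ))*t))
      = (n.factorial : ℂ) / (a + 2*(m:ℂ))^(n+1) := fun m => aux_integral (hre m) n
  rw [tsum_congr hval]
  simp only [hurwitzZetaSum, Complex.cpow_natCast]
  rw [zpow_neg, zpow_natCast]
  rw [tsum_congr (fun m : ℕ => show (n.factorial : ℂ) / (a + 2*(m:ℂ))^(n+1)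
      = (((2:ℂ)^(n+1))⁻¹ * (n.factorial : ℂ)) * (1/((m:ℂ) + a/2)^(n+1)) by
    rw [show a + 2*(m:ℂ) = 2*((m:ℂ)+a/2) by ring, mul_pow, div_eq_mul_inv, mul_inv]
    ring)]
  rw [tsum_mul_left]
end

section
/- For complex a with Re(a) > 0 not a negative even integer, ∫₀¹ (x^(a-1) - x)/(1 - x²) dx = -(1/2)(γ + ψ(a/2)), where γ is the Euler–Mascheroni constant and ψ is the digamma function. -/
open Complex MeasureTheory

namespace Stmt6
open Filter Set Topology Finset

lemma aux_ne_zero {s : ℂ} (hs : 0 < s.re) (n : ℕ) : (n : ℂ) + s ≠ 0 := by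
  intro h
  have h2 : ((n : ℂ) + s).re = 0 := by rw [h]; simp
  simp only [add_re, natCast_re] at h2
  have : (0:ℝ) ≤ (n:ℝ) := n.cast_nonneg
  linarith

lemma term_eq {s : ℂ} (hs : 0 < s.re) (n : ℕ) :
    1/((n:ℂ)+1) - 1/((n:ℂ)+s) = (s - 1)/((((n:ℂ)+1))*((n:ℂ)+s)) := by
  have h1 : ((n:ℂ)+1) ≠ 0 := by
    have := aux_ne_zero (s := 1) (by norm_num) n; simpa using this
  have h2 := aux_ne_zero hs n
  field_simp
  ring

lemma summable_sq : Summable (fun n : ℕ ↦ 1/((n:ℝ)+1)^2) := by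
  have h1 := (Real.summable_one_div_nat_pow (p := 2)).mpr one_lt_two
  have h := (summable_nat_add_iff (f := fun n : ℕ ↦ 1/(n:ℝ)^2) 1).mpr h1
  simpa using h

lemma norm_add_ge {s : ℂ} (hs : 0 < s.re) (n : ℕ) :
    min s.re 1 * ((n:ℝ)+1) ≤ ‖(n:ℂ)+s‖ := by
  have hre : (n:ℝ) + s.re ≤ ‖(n:ℂ)+s‖ := by
    have h3 := Complex.abs_re_le_norm ((n:ℂ)+s)
    calc (n:ℝ) + s.re = ((n:ℂ)+s).re := by simp
      _ ≤ |((n:ℂ)+s).re| := le_abs_self _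
      _ ≤ ‖(n:ℂ)+s‖ := h3
  have hn : (0:ℝ) ≤ (n:ℝ) := n.cast_nonneg
  rcases min_cases s.re 1 with ⟨h, hle⟩ | ⟨h, hlt⟩ <;> rw [h] <;> nlinarith

lemma norm_term_le {s : ℂ} (hs : 0 < s.re) (n : ℕ) :
    ‖1/((n:ℂ)+1) - 1/((n:ℂ)+s)‖ ≤ ‖s-1‖ / min s.re 1 * (1/((n:ℝ)+1)^2) := by
  rw [term_eq hs n, norm_div, norm_mul]
  have h1 : ‖(n:ℂ)+1‖ = (n:ℝ)+1 := by
    rw [show ((n:ℂ)+1) = (((n:ℝ)+1 : ℝ) : ℂ) by push_cast; ring, norm_real,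
      Real.norm_of_nonneg (by positivity)]
  have hmin : 0 < min s.re 1 := lt_min hs one_pos
  have h2 := norm_add_ge hs n
  rw [h1]
  have hD : min s.re 1 * ((n:ℝ)+1)^2 ≤ ((n:ℝ)+1) * ‖(n:ℂ)+s‖ := by
    have : min s.re 1 * ((n:ℝ)+1)^2 = ((n:ℝ)+1) * (min s.re 1 * ((n:ℝ)+1)) := by ring
    rw [this]
    exact mul_le_mul_of_nonneg_left h2 (by positivity)
  calc ‖s-1‖ / (((n:ℝ)+1) * ‖(n:ℂ)+s‖) ≤ ‖s-1‖ / (min s.re 1 * ((n:ℝ)+1)^2) :=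
        div_le_div_of_nonneg_left (norm_nonneg _) (by positivity) hD
    _ = ‖s-1‖ / min s.re 1 * (1/((n:ℝ)+1)^2) := by
        field_simp
  
lemma summable_term {s : ℂ} (hs : 0 < s.re) :
    Summable (fun n : ℕ ↦ 1/((n:ℂ)+1) - 1/((n:ℂ)+s)) := by
  apply Summable.of_norm
  apply Summable.of_nonneg_of_le (fun n ↦ norm_nonneg _) (norm_term_le hs)
  exact (summable_sq.mul_left _)

lemma summable_term_real {x : ℝ} (hx : 0 < x) :
    Summable (fun n : ℕ ↦ 1/((n:ℝ)+1) - 1/((n:ℝ)+x)) := by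
  have h := summable_term (s := (x:ℂ)) (by simpa using hx)
  have h2 := (Complex.reCLM : ℂ →L[ℝ] ℝ).summable h
  apply h2.congr
  intro n
  have : (1/((n:ℂ)+1) - 1/((n:ℂ)+(x:ℂ))) = ((((1:ℝ)/((n:ℝ)+1) - 1/((n:ℝ)+x)) : ℝ) : ℂ) := by
    push_cast; ring
  show (1/((n:ℂ)+1) - 1/((n:ℂ)+(x:ℂ))).re = _
  rw [this, Complex.ofReal_re]



local notation "γ" => Real.eulerMascheroniConstant

lemma harmonic_cast (m : ℕ) : (harmonic m : ℝ) = ∑ k ∈ range m, 1/((k:ℝ)+1) := by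
  rw [harmonic]
  push_cast
  simp [one_div]

lemma real_series {x : ℝ} (hx : 0 < x) (hx1 : x < 1) :
    deriv Real.Gamma x / Real.Gamma x
      = -γ + ∑' n : ℕ, (1/((n:ℝ)+1) - 1/((n:ℝ)+x)) := by
  set f : ℝ → ℝ := Real.log ∘ Real.Gamma with hf
  have hc : ConvexOn ℝ (Ioi 0) f := Real.convexOn_log_Gamma
  have hder : ∀ {y : ℝ}, 0 < y → DifferentiableAt ℝ f y := by
    intro y hy
    refine ((Real.differentiableAt_Gamma ?_).log (Real.Gamma_ne_zero ?_)) <;>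
      exact fun m ↦ ne_of_gt (by have : (0:ℝ) ≤ m := m.cast_nonneg; linarith)
  have hlog : ∀ {y : ℝ}, 0 < y → deriv f y = deriv Real.Gamma y / Real.Gamma y := by
    intro y hy
    rw [hf, Function.comp_def, deriv.log (Real.differentiableAt_Gamma
      (fun m ↦ ne_of_gt (by have : (0:ℝ) ≤ m := m.cast_nonneg; linarith)))
      (Real.Gamma_pos_of_pos hy).ne']
  have h_rec : ∀ y : ℝ, 0 < y → f (y + 1) = f y + Real.log y := by
    intro y hy
    simp only [hf, Function.comp_apply, Real.Gamma_add_one hy.ne',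
      Real.log_mul hy.ne' (Real.Gamma_pos_of_pos hy).ne', add_comm]
  have hder_rec : ∀ y : ℝ, 0 < y → deriv f (y + 1) = deriv f y + 1 / y := by
    intro y hy
    rw [← deriv_comp_add_const, one_div, ← Real.deriv_log,
      ← deriv_add (hder (by positivity)) (Real.differentiableAt_log hy.ne')]
    apply Filter.EventuallyEq.deriv_eq
    filter_upwards [eventually_gt_nhds hy] using h_rec
  have hnat : ∀ n : ℕ, deriv f ((n:ℝ) + 1) = -γ + (harmonic n : ℝ) := by
    intro n
    rw [hlog (by positivity), Real.deriv_Gamma_nat, Real.Gamma_nat_eq_factorial]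
    have hfac : ((n.factorial : ℕ) : ℝ) ≠ 0 := Nat.cast_ne_zero.mpr n.factorial_ne_zero
    field_simp
  have hiter : ∀ n : ℕ, deriv f (x + n) = deriv f x + ∑ k ∈ range n, 1/(x+(k:ℝ)) := by
    intro n
    induction n with
    | zero => simp
    | succ n ih =>
        have : x + ((n:ℝ)+1) = (x + n) + 1 := by ring
        rw [Nat.cast_succ, this, hder_rec _ (by positivity), ih, Finset.sum_range_succ]
        ring
  -- bounds via convexity
  have hlow : ∀ n : ℕ, deriv f ((n:ℝ)+1) ≤ deriv f (x + ((n:ℝ)+1)) := by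
    intro n
    have h1 : ((n:ℝ)+1) < x + ((n:ℝ)+1) := by linarith
    have m1 : ((n:ℝ)+1) ∈ Ioi (0:ℝ) := by simp; positivity
    have m2 : x + ((n:ℝ)+1) ∈ Ioi (0:ℝ) := by simp; positivity
    calc deriv f ((n:ℝ)+1) ≤ slope f ((n:ℝ)+1) (x + ((n:ℝ)+1)) :=
          hc.deriv_le_slope m1 m2 h1 (hder (by positivity))
      _ ≤ deriv f (x + ((n:ℝ)+1)) := hc.slope_le_deriv m1 m2 h1 (hder (by positivity))
  have hhigh : ∀ n : ℕ, deriv f (x + ((n:ℝ)+1)) ≤ deriv f ((n:ℝ)+2) := by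
    intro n
    have h1 : x + ((n:ℝ)+1) < (n:ℝ)+2 := by linarith
    have m1 : x + ((n:ℝ)+1) ∈ Ioi (0:ℝ) := by simp; positivity
    have m2 : ((n:ℝ)+2) ∈ Ioi (0:ℝ) := by simp; positivity
    calc deriv f (x + ((n:ℝ)+1)) ≤ slope f (x + ((n:ℝ)+1)) ((n:ℝ)+2) :=
          hc.deriv_le_slope m1 m2 h1 (hder (by positivity))
      _ ≤ deriv f ((n:ℝ)+2) := hc.slope_le_deriv m1 m2 h1 (hder (by positivity))
  set d := deriv f x with hd
  set T : ℕ → ℝ := fun n ↦ ∑ k ∈ range n, (1/((k:ℝ)+1) - 1/(x+(k:ℝ))) with hT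
  have hTeq : ∀ m : ℕ, T m = (harmonic m : ℝ) - ∑ k ∈ range m, 1/(x+(k:ℝ)) := by
    intro m
    simp only [hT, harmonic_cast, Finset.sum_sub_distrib]
  have key : ∀ n : ℕ, d + γ ≤ T (n+1) ∧ T (n+1) ≤ d + γ + 1/((n:ℝ)+1) := by
    intro n
    have hl := hlow n
    have hh := hhigh n
    have hit := hiter (n+1)
    push_cast at hit
    rw [hnat n, hit] at hl
    have h2 : deriv f ((n:ℝ)+2) = -γ + (harmonic (n+1) : ℝ) := by
      have h3 := hnat (n+1)
      push_cast at h3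
      rw [show (n:ℝ)+1+1 = (n:ℝ)+2 by ring] at h3
      exact h3
    rw [h2, hit] at hh
    have hsucc : (harmonic (n+1) : ℝ) = (harmonic n : ℝ) + 1/((n:ℝ)+1) := by
      rw [harmonic_succ]; push_cast; ring
    push_cast at hl hh
    constructor
    · rw [hTeq]
      push_cast
      linarith
    · rw [hTeq]
      push_cast
      rw [hsucc]
      linarith
  have hsum := summable_term_real hx
  have htendsT : Tendsto (fun n ↦ T (n+1)) atTop
      (𝓝 (∑' n : ℕ, (1/((n:ℝ)+1) - 1/((n:ℝ)+x)))) := by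
    have := hsum.hasSum.tendsto_sum_nat
    have h2 := this.comp (tendsto_add_atTop_nat 1)
    convert h2 using 2 with n
    rw [hT]
    apply Finset.sum_congr rfl
    intro k _
    rw [add_comm x (k:ℝ)]
  have htends2 : Tendsto (fun n ↦ T (n+1)) atTop (𝓝 (d + γ)) := by
    have hub : Tendsto (fun n : ℕ ↦ d + γ + 1/((n:ℝ)+1)) atTop (𝓝 (d + γ)) := by
      have h0 : Tendsto (fun n : ℕ ↦ 1/((n:ℝ)+1)) atTop (𝓝 0) :=
        tendsto_one_div_add_atTop_nhds_zero_nat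
      simpa using h0.const_add (d + γ)
    exact tendsto_of_tendsto_of_tendsto_of_le_of_le (tendsto_const_nhds)
      hub (fun n ↦ (key n).1) (fun n ↦ (key n).2)
  have := tendsto_nhds_unique htendsT htends2
  rw [← hlog hx, this]
  ring



noncomputable def S (s : ℂ) : ℂ := ∑' n : ℕ, (1/((n:ℂ)+1) - 1/((n:ℂ)+s))

lemma re_pos_of_mem_ball {s₀ z : ℂ} (hz : z ∈ Metric.ball s₀ (s₀.re/2)) : s₀.re/2 < z.re := by
  have h1 : |(z - s₀).re| ≤ ‖z - s₀‖ := Complex.abs_re_le_norm _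
  have h2 : ‖z - s₀‖ < s₀.re/2 := by rwa [← dist_eq_norm, ← Metric.mem_ball]
  have h3 : |(z - s₀).re| < s₀.re/2 := lt_of_le_of_lt h1 h2
  rw [abs_lt, Complex.sub_re] at h3
  linarith [h3.1]

lemma S_differentiableAt {s₀ : ℂ} (hs : 0 < s₀.re) : DifferentiableAt ℂ S s₀ := by
  set δ := s₀.re/2 with hδ
  have hδ0 : 0 < δ := by positivity
  set R : ℝ := ‖s₀‖ + δ with hR
  obtain ⟨N, hN⟩ := exists_nat_gt (R + 1)
  set U : Set ℂ := Metric.ball s₀ δ with hUdef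
  have hU : IsOpen U := Metric.isOpen_ball
  have hmem : ∀ z ∈ U, 0 < z.re ∧ ‖z‖ < R := by
    intro z hz
    refine ⟨lt_trans hδ0 (re_pos_of_mem_ball hz), ?_⟩
    have : ‖z - s₀‖ < δ := by rwa [← dist_eq_norm, ← Metric.mem_ball]
    calc ‖z‖ = ‖s₀ + (z - s₀)‖ := by ring_nf
      _ ≤ ‖s₀‖ + ‖z - s₀‖ := norm_add_le _ _
      _ < R := by rw [hR]; linarith
  -- tail differentiability
  have htail : DifferentiableOn ℂ
      (fun z ↦ ∑' m : ℕ, (1/(((m+N:ℕ):ℂ)+1) - 1/(((m+N:ℕ):ℂ)+z))) U := by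
    apply differentiableOn_tsum_of_summable_norm
      (F := fun (m : ℕ) (z : ℂ) ↦ 1/(((m+N:ℕ):ℂ)+1) - 1/(((m+N:ℕ):ℂ)+z))
      (u := fun m : ℕ ↦ (R+1) * (1/((m:ℝ)+1)^2)) (summable_sq.mul_left _)
    · intro m
      apply DifferentiableOn.sub (differentiableOn_const _)
      apply DifferentiableOn.div (differentiableOn_const _)
      · exact (differentiable_const _).add differentiable_id |>.differentiableOn
      · intro z hz
        exact aux_ne_zero (hmem z hz).1 (m+N)
    · exact hU
    · intro i w hw
      rw [term_eq (hmem w hw).1 (i+N), norm_div, norm_mul]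
      have hw1 : ‖w‖ < R := (hmem w hw).2
      have hb1 : ((i:ℝ)+1) ≤ ‖((i+N:ℕ):ℂ)+1‖ := by
        rw [show (((i+N:ℕ):ℂ)+1) = ((((i+N:ℕ):ℝ)+1 : ℝ) : ℂ) by push_cast; ring, norm_real,
          Real.norm_of_nonneg (by positivity)]
        push_cast
        linarith [N.cast_nonneg (α := ℝ)]
      have hb2 : ((i:ℝ)+1) ≤ ‖((i+N:ℕ):ℂ)+w‖ := by
        have h4 : ‖((i+N:ℕ):ℂ)‖ - ‖w‖ ≤ ‖((i+N:ℕ):ℂ) + w‖ := by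
          have h6 := norm_sub_norm_le (((i+N:ℕ):ℂ)) (-w)
          simpa [sub_neg_eq_add] using h6
        have h5 : ‖((i+N:ℕ):ℂ)‖ = ((i:ℝ)+(N:ℝ)) := by
          rw [Complex.norm_natCast]; push_cast; ring
        rw [h5] at h4
        have h7 : (R:ℝ) + 1 < N := hN
        linarith
      have hnum : ‖w - 1‖ ≤ R + 1 := by
        calc ‖w - 1‖ ≤ ‖w‖ + ‖(1:ℂ)‖ := norm_sub_le _ _
          _ ≤ R + 1 := by rw [norm_one]; linarith
      have hR0 : (0:ℝ) ≤ R + 1 := by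
        have h8 := norm_nonneg s₀; rw [hR]; linarith
      calc ‖w - 1‖ / (‖((i+N:ℕ):ℂ)+1‖ * ‖((i+N:ℕ):ℂ)+w‖)
          ≤ (R+1) / (((i:ℝ)+1) * ((i:ℝ)+1)) := by
            apply div_le_div₀ hR0 hnum (by positivity)
            exact mul_le_mul hb1 hb2 (by positivity) (norm_nonneg _)
        _ = (R+1) * (1/((i:ℝ)+1)^2) := by rw [mul_one_div, sq]
  have hfin : DifferentiableOn ℂ
      (fun z ↦ ∑ n ∈ range N, (1/((n:ℂ)+1) - 1/((n:ℂ)+z))) U := by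
    apply DifferentiableOn.fun_sum
    intro n _
    apply DifferentiableOn.sub (differentiableOn_const _)
    apply DifferentiableOn.div (differentiableOn_const _)
    · exact (differentiable_const _).add differentiable_id |>.differentiableOn
    · intro z hz
      exact aux_ne_zero (hmem z hz).1 n
  have heq : EqOn S (fun z ↦ (∑ n ∈ range N, (1/((n:ℂ)+1) - 1/((n:ℂ)+z)))
      + ∑' m : ℕ, (1/(((m+N:ℕ):ℂ)+1) - 1/(((m+N:ℕ):ℂ)+z))) U := by
    intro z hz
    rw [S]
    exact (Summable.sum_add_tsum_nat_add N (summable_term (hmem z hz).1)).symm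
  have hdo : DifferentiableOn ℂ S U := (hfin.add htail).congr heq
  exact hdo.differentiableAt (hU.mem_nhds (Metric.mem_ball_self hδ0))

lemma complex_ne_neg_nat {z : ℂ} (hz : 0 < z.re) : ∀ m : ℕ, z ≠ -(m:ℂ) := by
  intro m h
  have h2 : z.re = -(m:ℝ) := by rw [h]; simp
  have : (0:ℝ) ≤ (m:ℝ) := m.cast_nonneg
  linarith [hz.trans_eq h2]

lemma deriv_Gamma_ofReal {x : ℝ} (hx : 0 < x) :
    deriv Complex.Gamma (x:ℂ) = ((deriv Real.Gamma x : ℝ) : ℂ) := by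
  have hR : HasDerivAt Real.Gamma (deriv Real.Gamma x) x :=
    (Real.differentiableAt_Gamma
      (fun m ↦ ne_of_gt (by have : (0:ℝ) ≤ m := m.cast_nonneg; linarith))).hasDerivAt
  have hC : DifferentiableAt ℂ Complex.Gamma (x:ℂ) :=
    Complex.differentiableAt_Gamma _ (complex_ne_neg_nat (by simpa using hx))
  have h1 : HasDerivAt (fun y : ℝ ↦ Complex.Gamma (y:ℂ)) (deriv Complex.Gamma (x:ℂ)) x :=
    hC.hasDerivAt.comp_ofReal
  have h2 : HasDerivAt (fun y : ℝ ↦ ((Real.Gamma y : ℝ) : ℂ)) ((deriv Real.Gamma x : ℝ) : ℂ) x :=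
    hR.ofReal_comp
  have h3 : (fun y : ℝ ↦ Complex.Gamma (y:ℂ)) = (fun y : ℝ ↦ ((Real.Gamma y : ℝ) : ℂ)) :=
    funext fun y ↦ Complex.Gamma_ofReal y
  rw [h3] at h1
  exact h1.unique h2

lemma complex_series {s : ℂ} (hs : 0 < s.re) :
    deriv Complex.Gamma s / Complex.Gamma s
      = -(Real.eulerMascheroniConstant : ℂ) + S s := by
  set U : Set ℂ := {z | 0 < z.re} with hUdef
  have hUo : IsOpen U := isOpen_lt continuous_const Complex.continuous_re
  have hGd : DifferentiableOn ℂ Complex.Gamma U := fun z hz ↦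
    (Complex.differentiableAt_Gamma _ (complex_ne_neg_nat hz)).differentiableWithinAt
  have hGa : AnalyticOnNhd ℂ Complex.Gamma U := hGd.analyticOnNhd hUo
  have hf : AnalyticOnNhd ℂ (fun z ↦ deriv Complex.Gamma z / Complex.Gamma z) U := by
    apply DifferentiableOn.analyticOnNhd _ hUo
    intro z hz
    exact (((hGa.deriv z hz).differentiableAt.div
      (Complex.differentiableAt_Gamma _ (complex_ne_neg_nat hz))
      (Complex.Gamma_ne_zero (complex_ne_neg_nat hz)))).differentiableWithinAt
  have hg : AnalyticOnNhd ℂ (fun z ↦ -(Real.eulerMascheroniConstant : ℂ) + S z) U := by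
    apply DifferentiableOn.analyticOnNhd _ hUo
    intro z hz
    exact ((differentiableAt_const _).add (S_differentiableAt hz)).differentiableWithinAt
  have hpre : IsPreconnected U := (convex_halfSpace_re_gt 0).isPreconnected
  have hhalf : (1/2 : ℂ) ∈ U := by
    simp only [hUdef, Set.mem_setOf_eq]
    norm_num
  -- the sequence of real points
  set u : ℕ → ℂ := fun k ↦ (((1/2 + 1/((k:ℝ)+3)) : ℝ) : ℂ) with hu
  have hux : ∀ k : ℕ, ∃ x : ℝ, 0 < x ∧ x < 1 ∧ u k = (x:ℂ) ∧ x ≠ 1/2 := by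
    intro k
    refine ⟨1/2 + 1/((k:ℝ)+3), by positivity, ?_, rfl, ?_⟩
    · have h1 : 1/((k:ℝ)+3) ≤ 1/3 := by
        apply div_le_div_of_nonneg_left one_pos.le (by norm_num)
        · linarith [k.cast_nonneg (α := ℝ)]
      linarith
    · have h9 : 0 < 1/((k:ℝ)+3) := by positivity
      intro h
      have h10 : 1/((k:ℝ)+3) = 0 := by linarith
      linarith
  have heqreal : ∀ x : ℝ, 0 < x → x < 1 →
      deriv Complex.Gamma (x:ℂ) / Complex.Gamma (x:ℂ)
        = -(Real.eulerMascheroniConstant : ℂ) + S (x:ℂ) := by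
    intro x hx hx1
    rw [deriv_Gamma_ofReal hx, Complex.Gamma_ofReal, ← Complex.ofReal_div, real_series hx hx1,
      Complex.ofReal_add, Complex.ofReal_neg, S, Complex.ofReal_tsum]
    congr 1
    apply tsum_congr
    intro n
    push_cast
    ring
  have hfreq : ∃ᶠ z in 𝓝[≠] (1/2 : ℂ),
      deriv Complex.Gamma z / Complex.Gamma z
        = -(Real.eulerMascheroniConstant : ℂ) + S z := by
    have htend : Tendsto u atTop (𝓝[≠] (1/2 : ℂ)) := by
      rw [tendsto_nhdsWithin_iff]
      constructor
      · have h1 : Tendsto (fun k : ℕ ↦ (1/2 + 1/((k:ℝ)+3))) atTop (𝓝 (1/2)) := by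
          have h0 : Tendsto (fun k : ℕ ↦ 1/((k:ℝ)+3)) atTop (𝓝 0) := by
            apply (tendsto_one_div_add_atTop_nhds_zero_nat.comp (tendsto_add_atTop_nat 2)).congr
            intro k
            show 1/(((k+2:ℕ):ℝ)+1) = 1/((k:ℝ)+3)
            push_cast
            ring_nf
          simpa using h0.const_add (1/2 : ℝ)
        have h2 := (Complex.continuous_ofReal.tendsto (1/2 : ℝ)).comp h1
        rw [hu]
        have h3 : ((1/2 : ℝ) : ℂ) = (1/2 : ℂ) := by norm_num
        rw [← h3]
        exact h2
      · filter_upwards with k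
        obtain ⟨x, hx0, hx1, hxe, hxne⟩ := hux k
        simp only [Set.mem_compl_iff, Set.mem_singleton_iff, hxe]
        intro h
        apply hxne
        have := congrArg Complex.re h
        simpa using this
    apply htend.frequently
    apply Frequently.of_forall
    intro k
    obtain ⟨x, hx0, hx1, hxe, _⟩ := hux k
    rw [hxe]
    exact heqreal x hx0 hx1
  have := AnalyticOnNhd.eqOn_of_preconnected_of_frequently_eq hf hg hpre hhalf hfreq
  exact this hs



lemma aux_field (u v w : ℂ) (hv : (1:ℂ) - v ≠ 0) :
    u * ((w-1)/(v-1)) = (1-w) * (u/(1-v)) := by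
  have hv' : v - 1 ≠ 0 := by intro h; apply hv; linear_combination -h
  field_simp
  ring

lemma integral_Ioo_cpow {c : ℂ} (hc : -1 < c.re) :
    ∫ x in Ioo (0:ℝ) 1, (x:ℂ)^c = 1/(c+1) := by
  have hne : c + 1 ≠ 0 := by
    intro h
    have : (c+1).re = 0 := by rw [h]; simp
    simp only [add_re, one_re] at this
    linarith
  rw [← integral_Ioc_eq_integral_Ioo, ← intervalIntegral.integral_of_le zero_le_one,
    integral_cpow (Or.inl hc)]
  rw [Complex.ofReal_one, Complex.ofReal_zero, Complex.one_cpow, Complex.zero_cpow hne]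
  simp

lemma integrableOn_Ioo_cpow {c : ℂ} (hc : -1 < c.re) :
    IntegrableOn (fun x : ℝ ↦ (x:ℂ)^c) (Ioo (0:ℝ) 1) := by
  rw [← intervalIntegrable_iff_integrableOn_Ioo_of_le zero_le_one]
  exact intervalIntegral.intervalIntegrable_cpow' hc

section Bound
variable {a : ℂ} (ha : 0 < a.re)

lemma denom_ne {x : ℝ} (hx : x ∈ Ioo (0:ℝ) 1) : (1 : ℂ) - (x:ℂ)^2 ≠ 0 := by
  have h1 : ((1 : ℂ) - (x:ℂ)^2) = (((1 - x^2 : ℝ)) : ℂ) := by push_cast; ring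
  rw [h1]
  simp only [ne_eq, Complex.ofReal_eq_zero]
  nlinarith [hx.1, hx.2]

lemma norm_denom {x : ℝ} (hx : x ∈ Ioo (0:ℝ) 1) : ‖(1 : ℂ) - (x:ℂ)^2‖ = 1 - x^2 := by
  have h1 : ((1 : ℂ) - (x:ℂ)^2) = (((1 - x^2 : ℝ)) : ℂ) := by push_cast; ring
  rw [h1, Complex.norm_real, Real.norm_of_nonneg (by nlinarith [hx.1, hx.2])]

lemma g_bound : ∃ C : ℝ, 0 ≤ C ∧ ∀ x ∈ Ioo (0:ℝ) 1,
    ‖((x:ℂ)^(a-1) - (x:ℂ))/(1 - (x:ℂ)^2)‖ ≤ C * (x^(a.re-1) + 1) := by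
  set c : ℝ := 1/(‖a-1‖ + 1) with hc
  have hc0 : 0 < c := by rw [hc]; positivity
  have hc1 : c ≤ 1 := by
    rw [hc, div_le_one (by positivity)]
    have := norm_nonneg (a-1)
    linarith
  set t₀ : ℝ := Real.exp (-c) with ht₀
  have ht0 : 0 < t₀ := Real.exp_pos _
  have ht1 : t₀ < 1 := by
    rw [ht₀, Real.exp_lt_one_iff]
    linarith
  set C₁ : ℝ := 2 * ‖a-1‖ / t₀ + 1 with hC₁
  have hC₁0 : 0 ≤ C₁ := by
    rw [hC₁]; positivity
  set C : ℝ := C₁ + 1/(1-t₀^2) with hCdef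
  have hC0 : 0 ≤ C := by
    rw [hCdef]
    have : 0 < 1 - t₀^2 := by nlinarith
    positivity
  refine ⟨C, hC0, ?_⟩
  intro x hx
  obtain ⟨hx0, hx1⟩ := hx
  have hxpow1 : (0:ℝ) ≤ x^(a.re-1) := Real.rpow_nonneg hx0.le _
  rcases le_or_gt t₀ x with hcase | hcase
  · -- near 1
    have hlogle : -Real.log x ≤ c := by
      have := Real.log_le_log ht0 hcase
      rw [ht₀, Real.log_exp] at this
      linarith
    have hlogle2 : -Real.log x ≤ (1-x)/t₀ := by
      have h2 : Real.log x⁻¹ ≤ x⁻¹ - 1 := Real.log_le_sub_one_of_pos (by positivity)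
      rw [Real.log_inv] at h2
      have h3 : x⁻¹ - 1 = (1-x)/x := by field_simp
      rw [h3] at h2
      have h4 : (1-x)/x ≤ (1-x)/t₀ :=
        div_le_div_of_nonneg_left (by linarith) ht0 hcase
      linarith
    have hloge : ‖(a-1) * ((Real.log x : ℝ) : ℂ)‖ ≤ 1 := by
      rw [norm_mul, Complex.norm_real, Real.norm_eq_abs, abs_of_nonpos (Real.log_nonpos hx0.le hx1.le)]
      calc ‖a-1‖ * (-Real.log x) ≤ ‖a-1‖ * c :=
            mul_le_mul_of_nonneg_left hlogle (norm_nonneg _)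
        _ ≤ 1 := by
            rw [hc]
            rw [mul_one_div, div_le_one (by positivity)]
            linarith
    have hcpow : (x:ℂ)^(a-1) = Complex.exp ((a-1) * ((Real.log x : ℝ) : ℂ)) := by
      rw [Complex.cpow_def_of_ne_zero (by exact_mod_cast hx0.ne'), Complex.ofReal_log hx0.le,
        mul_comm]
    have hnum : ‖(x:ℂ)^(a-1) - 1‖ ≤ 2 * ‖a-1‖ * ((1-x)/t₀) := by
      rw [hcpow]
      calc ‖Complex.exp ((a-1) * ((Real.log x : ℝ) : ℂ)) - 1‖
          ≤ 2 * ‖(a-1) * ((Real.log x : ℝ) : ℂ)‖ :=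
            Complex.norm_exp_sub_one_le hloge
        _ = 2 * ‖a-1‖ * (-Real.log x) := by
            rw [norm_mul, Complex.norm_real, Real.norm_eq_abs, abs_of_nonpos (Real.log_nonpos hx0.le hx1.le)]
            ring
        _ ≤ 2 * ‖a-1‖ * ((1-x)/t₀) :=
            mul_le_mul_of_nonneg_left hlogle2 (by positivity)
    have hsplit : ((x:ℂ)^(a-1) - (x:ℂ)) = ((x:ℂ)^(a-1) - 1) + (((1-x:ℝ)) : ℂ) := by
      push_cast; ring
    have h1x : (0:ℝ) < 1 - x := by linarith
    have h1x2 : (0:ℝ) < 1 - x^2 := by nlinarith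
    rw [norm_div, norm_denom ⟨hx0, hx1⟩, hsplit]
    have hnorm1x : ‖(((1-x:ℝ)) : ℂ)‖ = 1-x := by
      rw [Complex.norm_real, Real.norm_of_nonneg h1x.le]
    calc ‖((x:ℂ)^(a-1) - 1) + (((1-x:ℝ)) : ℂ)‖ / (1-x^2)
        ≤ (2 * ‖a-1‖ * ((1-x)/t₀) + (1-x)) / (1-x^2) := by
          gcongr
          calc ‖((x:ℂ)^(a-1) - 1) + (((1-x:ℝ)) : ℂ)‖
              ≤ ‖(x:ℂ)^(a-1) - 1‖ + ‖(((1-x:ℝ)) : ℂ)‖ := norm_add_le _ _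
            _ ≤ 2 * ‖a-1‖ * ((1-x)/t₀) + (1-x) := by
                rw [hnorm1x]; exact add_le_add_left hnum _
      _ = (2 * ‖a-1‖ / t₀ + 1) * (1-x) / (1-x^2) := by ring
      _ = C₁ / (1+x) := by
          rw [hC₁]
          rw [show (1:ℝ) - x^2 = (1-x)*(1+x) by ring]
          field_simp
      _ ≤ C₁ := by
          apply div_le_self hC₁0
          linarith
      _ ≤ C := by
          rw [hCdef]
          have h5 : 0 < 1 - t₀^2 := by nlinarith
          have : 0 ≤ 1/(1-t₀^2) := by positivity
          linarith
      _ ≤ C * (x^(a.re-1) + 1) := by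
          nlinarith [hC0, hxpow1]
  · -- near 0
    have hnormnum : ‖(x:ℂ)^(a-1) - (x:ℂ)‖ ≤ x^(a.re-1) + 1 := by
      calc ‖(x:ℂ)^(a-1) - (x:ℂ)‖ ≤ ‖(x:ℂ)^(a-1)‖ + ‖(x:ℂ)‖ := norm_sub_le _ _
        _ = x^((a-1).re) + x := by
            rw [Complex.norm_cpow_eq_rpow_re_of_pos hx0,
              Complex.norm_real, Real.norm_of_nonneg hx0.le]
        _ ≤ x^(a.re-1) + 1 := by
            rw [Complex.sub_re, Complex.one_re]
            exact add_le_add_right hx1.le _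
    have h1x2 : (0:ℝ) < 1 - x^2 := by nlinarith
    have ht2 : 0 < 1 - t₀^2 := by nlinarith
    rw [norm_div, norm_denom ⟨hx0, hx1⟩]
    calc ‖(x:ℂ)^(a-1) - (x:ℂ)‖ / (1-x^2) ≤ (x^(a.re-1) + 1) / (1-x^2) := by
          gcongr
      _ ≤ (x^(a.re-1) + 1) / (1-t₀^2) := by
          apply div_le_div_of_nonneg_left (by positivity) ht2
          nlinarith
      _ = 1/(1-t₀^2) * (x^(a.re-1) + 1) := by ring
      _ ≤ C * (x^(a.re-1) + 1) := by
          apply mul_le_mul_of_nonneg_right _ (by positivity)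
          rw [hCdef]
          linarith

end Bound

section Main
variable {a : ℂ}

lemma g_continuousOn : ContinuousOn (fun x : ℝ ↦ ((x:ℂ)^(a-1) - (x:ℂ))/(1 - (x:ℂ)^2))
    (Ioo (0:ℝ) 1) := by
  apply ContinuousOn.div
  · apply ContinuousOn.sub
    · intro x hx
      exact (continuousAt_ofReal_cpow_const x (a-1) (Or.inr hx.1.ne')).continuousWithinAt
    · exact Complex.continuous_ofReal.continuousOn
  · apply ContinuousOn.sub continuousOn_const
    exact (Complex.continuous_ofReal.pow 2).continuousOn.congr (fun x _ ↦ by rw [Pi.pow_apply])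
  · exact fun x hx ↦ denom_ne hx

lemma g_integrableOn (ha : 0 < a.re) :
    IntegrableOn (fun x : ℝ ↦ ((x:ℂ)^(a-1) - (x:ℂ))/(1 - (x:ℂ)^2)) (Ioo (0:ℝ) 1) := by
  obtain ⟨C, hC0, hC⟩ := g_bound (a := a)
  have hbigInt : IntegrableOn (fun x : ℝ ↦ C * (x^(a.re-1) + 1)) (Ioo (0:ℝ) 1) := by
    apply Integrable.const_mul
    apply Integrable.add
    · exact (intervalIntegrable_iff_integrableOn_Ioo_of_le zero_le_one).mp
        (intervalIntegral.intervalIntegrable_rpow' (by linarith))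
    · exact integrableOn_const measure_Ioo_lt_top.ne
  apply Integrable.mono' hbigInt
  · exact (g_continuousOn (a := a)).aestronglyMeasurable measurableSet_Ioo
  · rw [ae_restrict_iff' measurableSet_Ioo]
    filter_upwards with x hx
    exact hC x hx

lemma partial_eq (x : ℝ) (hx : x ∈ Ioo (0:ℝ) 1) (N : ℕ) :
    ∑ n ∈ range N, ((x:ℂ)^(a-1+2*(n:ℂ)) - (x:ℂ)^(2*(n:ℂ)+1))
      = (1 - (((x^2)^N : ℝ) : ℂ)) * (((x:ℂ)^(a-1) - (x:ℂ))/(1 - (x:ℂ)^2)) := by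
  have hx0 : (x:ℂ) ≠ 0 := by exact_mod_cast hx.1.ne'
  have hterm : ∀ n : ℕ, ((x:ℂ)^(a-1+2*(n:ℂ)) - (x:ℂ)^(2*(n:ℂ)+1))
      = ((x:ℂ)^(a-1) - (x:ℂ)) * ((x:ℂ)^2)^n := by
    intro n
    have h1 : (x:ℂ)^(a-1+2*(n:ℂ)) = (x:ℂ)^(a-1) * ((x:ℂ)^2)^n := by
      rw [Complex.cpow_add _ _ hx0]
      congr 1
      rw [show (2*(n:ℂ)) = (((2*n : ℕ)) : ℂ) by push_cast; ring, Complex.cpow_natCast, pow_mul]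
    have h2 : (x:ℂ)^(2*(n:ℂ)+1) = (x:ℂ) * ((x:ℂ)^2)^n := by
      rw [show (2*(n:ℂ)+1) = (((2*n+1 : ℕ)) : ℂ) by push_cast; ring, Complex.cpow_natCast,
        pow_succ, pow_mul]
      ring
    rw [h1, h2]
    ring
  rw [Finset.sum_congr rfl (fun n _ ↦ hterm n), ← Finset.mul_sum]
  have hne : ((x:ℂ)^2) ≠ 1 := by
    intro h
    have := denom_ne hx
    rw [h] at this
    simp at this
  rw [geom_sum_eq hne]
  have hd := denom_ne hx
  have hcast : (((x^2)^N : ℝ) : ℂ) = ((x:ℂ)^2)^N := by push_cast; ring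
  rw [hcast]
  exact aux_field _ _ _ hd

lemma partial_integral (ha : 0 < a.re) (N : ℕ) :
    ∫ x in Ioo (0:ℝ) 1, ∑ n ∈ range N, ((x:ℂ)^(a-1+2*(n:ℂ)) - (x:ℂ)^(2*(n:ℂ)+1))
      = ∑ n ∈ range N, (1/(a+2*(n:ℂ)) - 1/(2*(n:ℂ)+2)) := by
  have hre1 : ∀ n : ℕ, (-1:ℝ) < (a-1+2*(n:ℂ)).re := by
    intro n
    simp only [Complex.add_re, Complex.sub_re, Complex.one_re, Complex.mul_re]
    simp
    nlinarith [n.cast_nonneg (α := ℝ)]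
  have hre2 : ∀ n : ℕ, (-1:ℝ) < (2*(n:ℂ)+1).re := by
    intro n
    simp
    nlinarith [n.cast_nonneg (α := ℝ)]
  rw [integral_finset_sum]
  · apply Finset.sum_congr rfl
    intro n _
    rw [integral_sub (integrableOn_Ioo_cpow (hre1 n)) (integrableOn_Ioo_cpow (hre2 n)),
      integral_Ioo_cpow (hre1 n), integral_Ioo_cpow (hre2 n)]
    congr 2 <;> ring
  · intro n _
    exact (integrableOn_Ioo_cpow (hre1 n)).sub (integrableOn_Ioo_cpow (hre2 n))

lemma term_half {a : ℂ} (ha : 0 < a.re) (n : ℕ) :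
    1/(a+2*(n:ℂ)) - 1/(2*(n:ℂ)+2) = -(1/2) * (1/((n:ℂ)+1) - 1/((n:ℂ)+a/2)) := by
    have e1 : a + 2*(n:ℂ) = 2*((n:ℂ)+a/2) := by ring
    have e2 : 2*(n:ℂ)+2 = 2*((n:ℂ)+1) := by ring
    rw [e1, e2]; simp only [one_div, mul_inv]
    ring

lemma integral_eq_tsum (ha : 0 < a.re) :
    ∫ x in Ioo (0:ℝ) 1, ((x:ℂ)^(a-1) - (x:ℂ))/(1 - (x:ℂ)^2)
      = ∑' n : ℕ, (1/(a+2*(n:ℂ)) - 1/(2*(n:ℂ)+2)) := by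
  set g : ℝ → ℂ := fun x ↦ ((x:ℂ)^(a-1) - (x:ℂ))/(1 - (x:ℂ)^2) with hg
  have hgInt := g_integrableOn ha
  -- dominated convergence
  have hdc : Tendsto (fun N ↦ ∫ x in Ioo (0:ℝ) 1,
      ∑ n ∈ range N, ((x:ℂ)^(a-1+2*(n:ℂ)) - (x:ℂ)^(2*(n:ℂ)+1))) atTop
      (𝓝 (∫ x in Ioo (0:ℝ) 1, g x)) := by
    apply tendsto_integral_of_dominated_convergence (fun x ↦ ‖g x‖)
    · intro N
      apply ContinuousOn.aestronglyMeasurable _ measurableSet_Ioo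
      apply continuousOn_finset_sum
      intro n _
      apply ContinuousOn.sub
      · intro x hx
        exact (continuousAt_ofReal_cpow_const x _ (Or.inr hx.1.ne')).continuousWithinAt
      · intro x hx
        exact (continuousAt_ofReal_cpow_const x _ (Or.inr hx.1.ne')).continuousWithinAt
    · exact hgInt.norm
    · intro N
      rw [ae_restrict_iff' measurableSet_Ioo]
      filter_upwards with x hx
      rw [partial_eq x hx N, norm_mul]
      have h1 : ‖(1 : ℂ) - (((x^2)^N : ℝ) : ℂ)‖ ≤ 1 := by
        have hp1 : (0:ℝ) ≤ (x^2)^N := by positivity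
        have hp2 : (x^2)^N ≤ 1 :=
          pow_le_one₀ (by positivity) (by nlinarith [hx.1, hx.2])
        rw [show ((1 : ℂ) - (((x^2)^N : ℝ) : ℂ)) = (((1 - (x^2)^N : ℝ)) : ℂ) by push_cast; ring,
          Complex.norm_real, Real.norm_of_nonneg (by linarith)]
        linarith
      calc ‖(1 : ℂ) - (((x^2)^N : ℝ) : ℂ)‖ * ‖g x‖ ≤ 1 * ‖g x‖ :=
            mul_le_mul_of_nonneg_right h1 (norm_nonneg _)
        _ = ‖g x‖ := one_mul _
    · rw [ae_restrict_iff' measurableSet_Ioo]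
      filter_upwards with x hx
      have hlim : Tendsto (fun N : ℕ ↦ ((x^2)^N : ℝ)) atTop (𝓝 0) := by
        apply tendsto_pow_atTop_nhds_zero_of_lt_one (by positivity)
        nlinarith [hx.1, hx.2]
      have : Tendsto (fun N : ℕ ↦ (1 - (((x^2)^N : ℝ) : ℂ)) * g x) atTop (𝓝 ((1 - 0) * g x)) := by
        apply Tendsto.mul_const
        apply Tendsto.const_sub
        rw [show (0:ℂ) = ((0:ℝ):ℂ) by simp]
        exact (Complex.continuous_ofReal.tendsto 0).comp hlim
      simp only [sub_zero, one_mul] at this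
      apply this.congr
      intro N
      exact (partial_eq x hx N).symm
  -- partial sums converge to tsum
  have hsummable : Summable (fun n : ℕ ↦ 1/(a+2*(n:ℂ)) - 1/(2*(n:ℂ)+2)) := by
    have h2 := summable_term (s := a/2) (by simpa using (by linarith : 0 < a.re/2))
    have h3 := (h2.mul_left (-(1/2) : ℂ))
    apply h3.congr
    intro n
    exact (term_half ha n).symm
  have hpartial : Tendsto (fun N ↦ ∑ n ∈ range N, (1/(a+2*(n:ℂ)) - 1/(2*(n:ℂ)+2))) atTop
      (𝓝 (∑' n : ℕ, (1/(a+2*(n:ℂ)) - 1/(2*(n:ℂ)+2)))) :=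
    hsummable.hasSum.tendsto_sum_nat
  have hdc2 := hdc.congr (fun N ↦ partial_integral ha N)
  exact tendsto_nhds_unique hdc2 hpartial

end Main

end Stmt6

open Complex MeasureTheory

/-- For complex `a` with `Re a > 0` (in particular not a negative even integer),
`∫₀¹ (x^(a-1) - x)/(1-x²) dx = -(1/2)(γ + ψ(a/2))`, where `ψ = Γ'/Γ` is the digamma
function and `γ` is the Euler–Mascheroni constant. -/
theorem stmt6 (a : ℂ) (ha : 0 < a.re) (ha2 : ∀ k : ℕ, a ≠ -2*((k:ℂ)+1)) :
    ∫ x in Set.Ioo (0:ℝ) 1, ((x:ℂ)^(a-1) - (x:ℂ))/(1 - (x:ℂ)^2)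
      = -(1/2) * ((Real.eulerMascheroniConstant : ℂ)
          + deriv Complex.Gamma (a/2) / Complex.Gamma (a/2)) := by
  have ha2' : 0 < (a/2).re := by
    rw [show (a/2 : ℂ) = ((1/2:ℝ):ℂ) * a by push_cast; ring, Complex.re_ofReal_mul]
    linarith
  rw [Stmt6.integral_eq_tsum ha]
  have h1 : ∑' n : ℕ, (1/(a+2*(n:ℂ)) - 1/(2*(n:ℂ)+2))
      = ∑' n : ℕ, (-(1/2) * (1/((n:ℂ)+1) - 1/((n:ℂ)+a/2))) := by
    apply tsum_congr
    intro n
    exact Stmt6.term_half ha n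
  rw [h1, tsum_mul_left]
  rw [Stmt6.complex_series ha2']
  show -(1/2) * Stmt6.S (a/2) = _
  ring
end

section
/- For a positive integer n, complex a, and complex s with Re(s + a) > 1, the Mellin-type integral ∑_{j=1}^{n} C(n,j) ((2a-1)^j/(j-1)!) ∫₀¹ (ln x)^(j-1) x^(s+a-2) dx equals 1 - (1 - (2a-1)/(s+a-1))^n. -/
/-!
Write `c = s + a - 1`. The integral `∫₀¹ (log x)^k x^(c-1) dx` is the Mellin transform at `c`
of `(log x)^k` cut off to `(0, 1]`. Multiplying by `log` differentiates a Mellin transform, so this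
is the `k`-th derivative of the Mellin transform `1/c` of the indicator of `(0, 1]`, namely
`(-1)^k k!/c^(k+1)`. Hence the `j`-th summand is `-C(n,j) (-(2a-1)/c)^j`, and the binomial
theorem sums these to `1 - (1 - (2a-1)/c)^n`.
-/

open Complex MeasureTheory Set Filter Asymptotics Topology

noncomputable def logPowIoc (k : ℕ) : ℝ → ℂ :=
  (Ioc 0 1).indicator fun t => (Real.log t : ℂ) ^ k

lemma logPowIoc_succ (k : ℕ) :
    logPowIoc (k + 1) = fun t => (Real.log t : ℂ) • logPowIoc k t := by
  funext t
  by_cases ht : t ∈ Ioc 0 1 <;> simp [logPowIoc, ht, pow_succ, mul_comm]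

lemma locallyIntegrableOn_logPowIoc (k : ℕ) : LocallyIntegrableOn (logPowIoc k) (Ioi 0) := by
  induction k with
  | zero =>
    refine (Integrable.locallyIntegrable ?_).locallyIntegrableOn _
    exact (integrable_indicator_iff measurableSet_Ioc).2 (integrableOn_const (by simp))
  | succ k ih =>
    rw [logPowIoc_succ]
    exact ih.continuousOn_smul isOpen_Ioi.isLocallyClosed
      (continuous_ofReal.comp_continuousOn (Real.continuousOn_log.mono fun t ht => ne_of_gt ht))

lemma logPowIoc_isBigO_atTop (k : ℕ) (a : ℝ) : logPowIoc k =O[atTop] (· ^ (-a)) := by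
  refine (isBigO_zero _ _).congr' ?_ EventuallyEq.rfl
  filter_upwards [eventually_gt_atTop 1] with t ht
  simp [logPowIoc, ht.not_ge]

lemma logPowIoc_isBigO_nhdsGT_zero (k : ℕ) {b : ℝ} (hb : 0 < b) :
    logPowIoc k =O[𝓝[>] 0] (· ^ (-b)) := by
  refine IsBigO.trans ?_ (isLittleO_abs_log_rpow_rpow_nhdsGT_zero k (neg_neg_of_pos hb)).isBigO
  refine isBigO_of_le _ fun t => ?_
  rw [Real.rpow_natCast, Real.norm_eq_abs, abs_pow, abs_abs]
  by_cases ht : t ∈ Ioc 0 1 <;> simp [logPowIoc, ht]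

lemma hasDerivAt_mellin_logPowIoc (k : ℕ) {s : ℂ} (hs : 0 < s.re) :
    HasDerivAt (mellin (logPowIoc k)) (mellin (logPowIoc (k + 1)) s) s := by
  rw [logPowIoc_succ]
  exact (mellin_hasDerivAt_of_isBigO_rpow (locallyIntegrableOn_logPowIoc k)
    (logPowIoc_isBigO_atTop k (s.re + 1)) (lt_add_one _)
    (logPowIoc_isBigO_nhdsGT_zero k (half_pos hs)) (half_lt_self hs)).2

lemma mellin_logPowIoc (k : ℕ) {s : ℂ} (hs : 0 < s.re) :
    mellin (logPowIoc k) s = (-1) ^ k * k.factorial / s ^ (k + 1) := by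
  induction k generalizing s with
  | zero => simpa [logPowIoc] using (hasMellin_one_Ioc hs).2
  | succ k ih =>
    have hs0 : s ≠ 0 := fun h => by simp [h] at hs
    have heq :
        mellin (logPowIoc k) =ᶠ[𝓝 s] fun z => (-1) ^ k * k.factorial * (z ^ (k + 1))⁻¹ :=
      mem_of_superset ((isOpen_lt continuous_const continuous_re).mem_nhds hs) fun _ => ih
    have hderiv := ((hasDerivAt_pow (k + 1) s).inv (pow_ne_zero _ hs0)).const_mul
      ((-1) ^ k * (k.factorial : ℂ))
    rw [(hasDerivAt_mellin_logPowIoc k hs).unique (hderiv.congr_of_eventuallyEq heq)]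
    push_cast [Nat.factorial_succ]
    field_simp
    ring

lemma integral_Ioo_log_pow_mul_cpow (k : ℕ) {c : ℂ} (hc : 0 < c.re) :
    ∫ x in Ioo (0 : ℝ) 1, (Real.log x : ℂ) ^ k * (x : ℂ) ^ (c - 1)
      = (-1) ^ k * k.factorial / c ^ (k + 1) := by
  rw [← mellin_logPowIoc k hc, mellin, ← integral_Ioc_eq_integral_Ioo]
  simp_rw [logPowIoc, ← indicator_smul_apply (Ioc 0 1) (fun t : ℝ => (t : ℂ) ^ (c - 1)),
    smul_eq_mul]
  rw [setIntegral_indicator measurableSet_Ioc, inter_eq_right.2 Ioc_subset_Ioi_self]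
  simp_rw [mul_comm]

lemma sum_Icc_one_choose_mul_pow {R : Type*} [CommRing R] (n : ℕ) (x : R) :
    ∑ j ∈ Finset.Icc 1 n, (n.choose j : R) * x ^ j = (1 + x) ^ n - 1 := by
  rw [add_comm, add_pow, Finset.sum_range_eq_add_Ico _ (by omega : 0 < n + 1),
    Finset.Ico_add_one_right_eq_Icc]
  simp [mul_comm]

theorem stmt7_general (n : ℕ) (a s : ℂ) (h : 1 < (s+a).re) :
    ∑ j ∈ Finset.Icc 1 n, (n.choose j : ℂ) * (2*a-1)^j / ((j-1).factorial : ℂ) *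
        ∫ x in Set.Ioo (0:ℝ) 1, (Real.log x : ℂ)^(j-1) * (x:ℂ)^(s+a-2)
      = 1 - (1 - (2*a-1)/(s+a-1))^n := by
  set c := s + a - 1
  have hc : 0 < c.re := by simp only [c, sub_re, one_re]; linarith
  have hc0 : c ≠ 0 := fun h0 => by simp [h0] at hc
  have hterm : ∀ j ∈ Finset.Icc 1 n,
      (n.choose j : ℂ) * (2*a-1)^j / ((j-1).factorial : ℂ) *
        ∫ x in Ioo (0:ℝ) 1, (Real.log x : ℂ)^(j-1) * (x:ℂ)^(s+a-2)
      = -((n.choose j : ℂ) * (-((2*a-1)/c))^j) := by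
    intro j hj
    obtain ⟨i, rfl⟩ : ∃ i, j = i + 1 := Nat.exists_eq_add_of_le' (Finset.mem_Icc.1 hj).1
    rw [show s + a - 2 = c - 1 by ring, Nat.add_sub_cancel, integral_Ioo_log_pow_mul_cpow i hc]
    have hfact : (i.factorial : ℂ) ≠ 0 := Nat.cast_ne_zero.2 i.factorial_ne_zero
    rw [neg_pow ((2 * a - 1) / c), div_pow]
    field_simp
    ring
  rw [Finset.sum_congr rfl hterm, Finset.sum_neg_distrib, sum_Icc_one_choose_mul_pow]
  ring

/-- For a positive integer `n` and complex `a`, `s` with `Re(s+a) > 1`,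
`∑_{j=1}^n C(n,j) ((2a-1)^j/(j-1)!) ∫₀¹ (ln x)^(j-1) x^(s+a-2) dx
  = 1 - (1 - (2a-1)/(s+a-1))^n`. -/
theorem stmt7 (n : ℕ) (hn : 1 ≤ n) (a s : ℂ) (h : 1 < (s+a).re) :
    ∑ j ∈ Finset.Icc 1 n, (n.choose j : ℂ) * (2*a-1)^j / ((j-1).factorial : ℂ) *
        ∫ x in Set.Ioo (0:ℝ) 1, (Real.log x : ℂ)^(j-1) * (x:ℂ)^(s+a-2)
      = 1 - (1 - (2*a-1)/(s+a-1))^n :=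
  stmt7_general n a s h
end
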